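/- Let W ≤ GL(ℂ^n) be a well-generated complex reflection group with Coxeter element c, let Z_1, …, Z_k be flats of W, and let π be a permutation of {1, …, k}. Then the number of block factorizations (w_1, …, w_k) of c with V^{w_i} in the W-orbit of Z_i for all i equals the number of block factorizations (w_1, …, w_k) of c with V^{w_i} in the W-orbit of Z_{π(i)} for all i. -/

import Mathlib

open scoped Classical

noncomputable section

namespace CRG

/-- The ambient space `ℂⁿ`. -/
abbrev V (n : ℕ) := Fin n → ℂ

/-- The group `GL(ℂⁿ)` of linear automorphisms of `ℂⁿ`. -/
abbrev GLn (n : ℕ) := V n ≃ₗ[ℂ] V n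

/-- The fixed space `V^t = ker (t - id)` of a linear automorphism. -/
def fixedSpace {n : ℕ} (t : GLn n) : Submodule ℂ (V n) :=
  LinearMap.ker (t.toLinearMap - LinearMap.id)

/-- A pseudo-reflection: an element of finite order whose fixed space has codimension 1. -/
def IsPseudoReflection {n : ℕ} (t : GLn n) : Prop :=
  IsOfFinOrder t ∧ Module.finrank ℂ (fixedSpace t) + 1 = n

/-- The set of pseudo-reflections belonging to a subgroup `W`. -/
def pseudoReflections {n : ℕ} (W : Subgroup (GLn n)) : Set (GLn n) :=
  {t | t ∈ W ∧ IsPseudoReflection t}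

/-- A complex reflection group: a finite subgroup generated by its pseudo-reflections. -/
def IsReflectionGroup {n : ℕ} (W : Subgroup (GLn n)) : Prop :=
  Finite W ∧ Subgroup.closure (pseudoReflections W) = W

/-- `W` is irreducible: no nonzero proper subspace is `W`-invariant. -/
def IsIrreducible {n : ℕ} (W : Subgroup (GLn n)) : Prop :=
  ∀ U : Submodule ℂ (V n), (∀ w ∈ W, ∀ v ∈ U, w v ∈ U) → U = ⊥ ∨ U = ⊤

/-- `W` is well-generated: an irreducible complex reflection group generated by `n`
pseudo-reflections. -/
def IsWellGenerated {n : ℕ} (W : Subgroup (GLn n)) : Prop :=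
  IsReflectionGroup W ∧ IsIrreducible W ∧
    ∃ S : Finset (GLn n), S.card = n ∧ ↑S ⊆ pseudoReflections W ∧
      Subgroup.closure (S : Set (GLn n)) = W

/-- The reflecting hyperplanes of `W`: fixed spaces of its pseudo-reflections. -/
def reflHyperplanes {n : ℕ} (W : Subgroup (GLn n)) : Set (Submodule ℂ (V n)) :=
  {H | ∃ t ∈ pseudoReflections W, fixedSpace t = H}

/-- The (generalized) Coxeter number `h = (N + N*)/r`, where `N` is the number of
reflecting hyperplanes, `N*` the number of pseudo-reflections, and `r` the rank. -/
def coxNumber {n : ℕ} (W : Subgroup (GLn n)) (r : ℕ) : ℕ :=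
  ((reflHyperplanes W).ncard + (pseudoReflections W).ncard) / r

/-- A Coxeter element of the reflection group `W` of rank `r`: an element of `W` with an
eigenvector of eigenvalue `exp(2πi/h)` lying on no reflecting hyperplane of `W`. -/
def IsCoxeterElementOf {n : ℕ} (W : Subgroup (GLn n)) (r : ℕ) (c : GLn n) : Prop :=
  c ∈ W ∧ ∃ v : V n, (∀ H ∈ reflHyperplanes W, v ∉ H) ∧
    c v = Complex.exp (((2 * Real.pi : ℝ) : ℂ) * Complex.I / (coxNumber W r : ℂ)) • v

/-- A Coxeter element of `W ≤ GL(ℂⁿ)` (full rank `n`). -/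
def IsCoxeterElement {n : ℕ} (W : Subgroup (GLn n)) (c : GLn n) : Prop :=
  IsCoxeterElementOf W n c

/-- A flat of `W`: an intersection of reflecting hyperplanes (with `V` as the
empty intersection). -/
def IsFlat {n : ℕ} (W : Subgroup (GLn n)) (Z : Submodule ℂ (V n)) : Prop :=
  ∃ 𝒮 : Set (Submodule ℂ (V n)), 𝒮 ⊆ reflHyperplanes W ∧ Z = sInf 𝒮

/-- The pointwise stabilizer `W_Z` of `Z` in `W`. -/
def pointwiseStab {n : ℕ} (W : Subgroup (GLn n)) (Z : Submodule ℂ (V n)) :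
    Subgroup (GLn n) where
  carrier := {w | w ∈ W ∧ ∀ z ∈ Z, w z = z}
  one_mem' := ⟨W.one_mem, fun _ _ => rfl⟩
  mul_mem' := by
    rintro a b ⟨ha, ha'⟩ ⟨hb, hb'⟩
    refine ⟨W.mul_mem ha hb, fun z hz => ?_⟩
    show a (b z) = z
    rw [hb' z hz, ha' z hz]
  inv_mem' := by
    rintro a ⟨ha, ha'⟩
    refine ⟨W.inv_mem ha, fun z hz => ?_⟩
    show a.symm z = z
    conv_lhs => rw [← ha' z hz]
    exact a.symm_apply_apply z

/-- The setwise stabilizer `N_W(Z)` of `Z` in `W` (elements with `wZ = Z`). -/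
def setwiseStab {n : ℕ} (W : Subgroup (GLn n)) (Z : Submodule ℂ (V n)) :
    Subgroup (GLn n) where
  carrier := {w | w ∈ W ∧ ∀ z : V n, z ∈ Z ↔ w z ∈ Z}
  one_mem' := ⟨W.one_mem, fun _ => Iff.rfl⟩
  mul_mem' := by
    rintro a b ⟨ha, ha'⟩ ⟨hb, hb'⟩
    refine ⟨W.mul_mem ha hb, fun z => ?_⟩
    have h1 : (a * b) z = a (b z) := rfl
    rw [h1]
    exact (hb' z).trans (ha' (b z))
  inv_mem' := by
    rintro a ⟨ha, ha'⟩
    refine ⟨W.inv_mem ha, fun z => ?_⟩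
    have h1 : (a⁻¹ : GLn _) z = a.symm z := rfl
    rw [h1]
    have h2 := ha' (a.symm z)
    rw [a.apply_symm_apply] at h2
    exact h2.symm

/-- The index `[N_W(Z) : W_Z]` of the pointwise stabilizer in the setwise stabilizer. -/
def stabIndex {n : ℕ} (W : Subgroup (GLn n)) (Z : Submodule ℂ (V n)) : ℕ :=
  Subgroup.relIndex (pointwiseStab W Z) (setwiseStab W Z)

/-- The reflection length `l_R(w)`: the least number of pseudo-reflections of `W`
whose product is `w`. -/
def reflLength {n : ℕ} (W : Subgroup (GLn n)) (w : GLn n) : ℕ :=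
  sInf {s | ∃ l : List (GLn n), l.length = s ∧ (∀ t ∈ l, t ∈ pseudoReflections W) ∧
    l.prod = w}

/-- `Z'` lies in the `W`-orbit of `Z`. -/
def inWOrbit {n : ℕ} (W : Subgroup (GLn n)) (Z Z' : Submodule ℂ (V n)) : Prop :=
  ∃ u ∈ W, Submodule.map (u : GLn n).toLinearMap Z = Z'

/-- `w` is a parabolic Coxeter element of type `[Z]`: its fixed space lies in the
`W`-orbit of `Z`, and `w` is a Coxeter element of the parabolic subgroup `W_{V^w}`
(whose rank is the codimension of `V^w`). -/
def IsParabolicCoxeterOfType {n : ℕ} (W : Subgroup (GLn n)) (Z : Submodule ℂ (V n))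
    (w : GLn n) : Prop :=
  inWOrbit W Z (fixedSpace w) ∧
    IsCoxeterElementOf (pointwiseStab W (fixedSpace w))
      (n - Module.finrank ℂ (fixedSpace w)) w

/-- A single Hurwitz move on tuples: replacing an adjacent pair `(wᵢ, wᵢ₊₁)` by
`(wᵢ₊₁, wᵢ₊₁⁻¹ wᵢ wᵢ₊₁)`. -/
def HurwitzMove {G : Type*} [Group G] {k : ℕ} (a b : Fin k → G) : Prop :=
  ∃ (i : ℕ) (hi : i + 1 < k),
    b ⟨i, Nat.lt_of_succ_lt hi⟩ = a ⟨i + 1, hi⟩ ∧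
    b ⟨i + 1, hi⟩ = (a ⟨i + 1, hi⟩)⁻¹ * a ⟨i, Nat.lt_of_succ_lt hi⟩ * a ⟨i + 1, hi⟩ ∧
    ∀ j : Fin k, (j : ℕ) ≠ i → (j : ℕ) ≠ i + 1 → b j = a j

/-- Hurwitz equivalence: related by a finite sequence of Hurwitz moves and
inverse Hurwitz moves. -/
def HurwitzEquiv {G : Type*} [Group G] {k : ℕ} (a b : Fin k → G) : Prop :=
  Relation.EqvGen HurwitzMove a b

/-- A (reduced) block factorization of `c`: a tuple of nonidentity elements of `W`
whose product is `c` and whose reflection lengths add up to that of `c`. -/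
def IsBlockFactorization {n : ℕ} (W : Subgroup (GLn n)) (c : GLn n) {k : ℕ}
    (w : Fin k → GLn n) : Prop :=
  (∀ i, w i ∈ W ∧ w i ≠ 1) ∧ (List.ofFn w).prod = c ∧
    (∑ i, reflLength W (w i)) = reflLength W c

/-- A `W`-invariant polynomial: `p(w v) = p(v)` for all `w ∈ W`. -/
def IsInvariantPoly {n : ℕ} (W : Subgroup (GLn n)) (p : MvPolynomial (Fin n) ℂ) : Prop :=
  ∀ w ∈ W, ∀ v : V n, MvPolynomial.eval (w v) p = MvPolynomial.eval v p

/-- A system of basic invariants for `W`, with (nondecreasing) degrees `d`. -/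
def IsBasicInvariantSystem {n : ℕ} (W : Subgroup (GLn n))
    (f : Fin n → MvPolynomial (Fin n) ℂ) (d : Fin n → ℕ) : Prop :=
  (∀ i, (f i).IsHomogeneous (d i)) ∧ Monotone d ∧ AlgebraicIndependent ℂ f ∧
    (∀ i, IsInvariantPoly W (f i)) ∧
    ∀ p : MvPolynomial (Fin n) ℂ, IsInvariantPoly W p →
      p ∈ Algebra.adjoin ℂ (Set.range f)

/-- A point of `ℂⁿ` with real coordinates. -/
def IsRealPoint {n : ℕ} (v : V n) : Prop := ∀ i, (v i).im = 0

/-- A linear automorphism defined over `ℝ` (preserving the real points). -/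
def PreservesReal {n : ℕ} (w : GLn n) : Prop :=
  ∀ v : V n, IsRealPoint v → IsRealPoint (w v)

/-- A (complexified) Weyl group: a finite group of real linear automorphisms generated
by reflections (involutions fixing a hyperplane) and stabilizing a full-rank lattice. -/
def IsWeylGroup {n : ℕ} (W : Subgroup (GLn n)) : Prop :=
  Finite W ∧ (∀ w ∈ W, PreservesReal w) ∧
    Subgroup.closure {t : GLn n | t ∈ W ∧ IsPseudoReflection t ∧ t * t = 1} = W ∧
    ∃ b : Fin n → V n, (∀ i, IsRealPoint (b i)) ∧ LinearIndependent ℂ b ∧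
      ∀ w ∈ W, ∀ i, w (b i) ∈ Submodule.span ℤ (Set.range b)

/-- The intersection lattice of the arrangement `𝒜` inside the ambient space `U`
(all intersections of subfamilies, with `U` as the empty intersection). -/
def interLattice {n : ℕ} (𝒜 : Finset (Submodule ℂ (V n))) (U : Submodule ℂ (V n)) :
    Finset (Submodule ℂ (V n)) :=
  𝒜.powerset.image (fun S => S.inf id ⊓ U)

/-- `μ` is the Möbius function `μ(U, ·)` of the intersection lattice of `𝒜` in `U`:
`μ(U,U) = 1` and for `X < U` in the lattice, `∑_{X ≤ Y ≤ U} μ(U,Y) = 0`. -/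
def IsMoebius {n : ℕ} (𝒜 : Finset (Submodule ℂ (V n))) (U : Submodule ℂ (V n))
    (μ : Submodule ℂ (V n) → ℤ) : Prop :=
  μ U = 1 ∧ ∀ X ∈ interLattice 𝒜 U, X ≠ U →
    (∑ Y ∈ (interLattice 𝒜 U).filter (fun Y => X ≤ Y), μ Y) = 0

/-- The characteristic polynomial `χ(𝒜, t) = ∑_{X ∈ L(𝒜)} μ(U,X) t^{dim X}`. -/
def charPolyμ {n : ℕ} (𝒜 : Finset (Submodule ℂ (V n))) (U : Submodule ℂ (V n))
    (μ : Submodule ℂ (V n) → ℤ) : Polynomial ℤ :=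
  ∑ X ∈ interLattice 𝒜 U, Polynomial.C (μ X) * Polynomial.X ^ (Module.finrank ℂ X)

/-- The restricted arrangement `𝒜_W^Z = {H ⊓ Z : H a reflecting hyperplane, Z ⊄ H}`. -/
def restrictedArrangement {n : ℕ} (W : Subgroup (GLn n)) (Z : Submodule ℂ (V n)) :
    Set (Submodule ℂ (V n)) :=
  {K | ∃ H ∈ reflHyperplanes W, ¬ Z ≤ H ∧ K = H ⊓ Z}

/-- The multiplicity of a polynomial at the origin: the minimal total degree of a
monomial occurring in it. -/
def multiplicityAtZero {n : ℕ} (q : MvPolynomial (Fin n) ℂ) : ℕ :=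
  sInf {D : ℕ | ∃ m ∈ q.support, (m.sum fun _ e => e) = D}

/-!
A Hurwitz move replaces an adjacent pair `(a, b)` of a factorization by `(b, b⁻¹ a b)`; it keeps
the product and is invertible. Conjugation by an element of `W` preserves membership in `W`,
being `≠ 1`, reflection length, and the `W`-orbit of the fixed space, so the move is a bijection
from the block factorizations of type `(…, Zᵢ, Zᵢ₊₁, …)` onto those of type `(…, Zᵢ₊₁, Zᵢ, …)`.
Adjacent transpositions generate the symmetric group.
-/

section Conjugation

variable {n : ℕ} {W : Subgroup (GLn n)} {g : GLn n}

lemma fixedSpace_conj (g w : GLn n) :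
    fixedSpace (g * w * g⁻¹) = (fixedSpace w).map g.toLinearMap := by
  ext v
  simp only [fixedSpace, LinearMap.mem_ker, LinearMap.sub_apply, LinearMap.id_apply, sub_eq_zero,
    Submodule.mem_map_equiv]
  exact ⟨fun h => by simpa using congrArg g.symm h, fun h => by simp [h]⟩

lemma conj_mem_pseudoReflections (hg : g ∈ W) {t : GLn n} (ht : t ∈ pseudoReflections W) :
    g * t * g⁻¹ ∈ pseudoReflections W := by
  obtain ⟨htW, hfin, hrank⟩ := ht
  refine ⟨W.mul_mem (W.mul_mem hg htW) (W.inv_mem hg), isConj_iff.2 ⟨g, rfl⟩ |>.isOfFinOrder hfin,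
    ?_⟩
  rwa [fixedSpace_conj, LinearEquiv.finrank_map_eq]

lemma reflLength_conj (hg : g ∈ W) (w : GLn n) :
    reflLength W (g * w * g⁻¹) = reflLength W w := by
  have factor_conj : ∀ g ∈ W, ∀ (w : GLn n) (l : List (GLn n)),
      (∀ t ∈ l, t ∈ pseudoReflections W) → l.prod = w →
      ∃ l' : List (GLn n), l'.length = l.length ∧ (∀ t ∈ l', t ∈ pseudoReflections W) ∧
        l'.prod = g * w * g⁻¹ := by
    rintro g hg w l hl rfl
    refine ⟨l.map (MulAut.conj g), List.length_map _, ?_, ?_⟩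
    · simp only [List.mem_map, forall_exists_index, and_imp, forall_apply_eq_imp_iff₂]
      exact fun t ht => conj_mem_pseudoReflections hg (hl t ht)
    · rw [← map_list_prod, MulAut.conj_apply]
  unfold reflLength
  congr 1
  ext s
  constructor
  · rintro ⟨l, rfl, hl, hprod⟩
    obtain ⟨l', hlen, hl', hprod'⟩ := factor_conj g⁻¹ (W.inv_mem hg) _ l hl hprod
    exact ⟨l', hlen, hl', by simpa [mul_assoc] using hprod'⟩
  · rintro ⟨l, rfl, hl, hprod⟩
    exact factor_conj g hg w l hl hprod

lemma inWOrbit.map (hg : g ∈ W) {Z X : Submodule ℂ (V n)} (h : inWOrbit W Z X) :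
    inWOrbit W Z (X.map g.toLinearMap) := by
  obtain ⟨u, hu, rfl⟩ := h
  exact ⟨g * u, W.mul_mem hg hu, Submodule.map_comp _ _ _⟩

end Conjugation

def ConjPermuted {G : Type*} [Group G] {k : ℕ} (S : Subgroup G) (π : Equiv.Perm (Fin k))
    (a b : Fin k → G) : Prop :=
  ∀ j, ∃ g ∈ S, b j = g * a (π j) * g⁻¹

namespace ConjPermuted

variable {n k : ℕ} {W : Subgroup (GLn n)} {π : Equiv.Perm (Fin k)} {a b : Fin k → GLn n}

lemma isBlockFactorization {c : GLn n} (h : ConjPermuted W π a b)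
    (hprod : (List.ofFn b).prod = (List.ofFn a).prod) (ha : IsBlockFactorization W c a) :
    IsBlockFactorization W c b := by
  obtain ⟨hmem, hc, hlen⟩ := ha
  choose g hg hb using h
  refine ⟨fun j => ?_, hprod.trans hc, ?_⟩
  · rw [hb j, Ne, conj_eq_one_iff]
    exact ⟨W.mul_mem (W.mul_mem (hg j) (hmem (π j)).1) (W.inv_mem (hg j)), (hmem (π j)).2⟩
  · simp_rw [hb, reflLength_conj (hg _)]
    rwa [Equiv.sum_comp π (fun j => reflLength W (a j))]

lemma inWOrbit_fixedSpace {T : Fin k → Submodule ℂ (V n)} (h : ConjPermuted W π a b)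
    (ha : ∀ j, inWOrbit W (T j) (fixedSpace (a j))) (j : Fin k) :
    inWOrbit W (T (π j)) (fixedSpace (b j)) := by
  obtain ⟨g, hg, hb⟩ := h j
  rw [hb, fixedSpace_conj]
  exact (ha (π j)).map hg

end ConjPermuted

lemma prod_ofFn_eq_of_adjacent_mul_eq {M : Type*} [Monoid M] {m : ℕ} {a b : Fin (m + 1) → M}
    {i : Fin m} (hpair : b i.castSucc * b i.succ = a i.castSucc * a i.succ)
    (hrest : ∀ j, j ≠ i.castSucc → j ≠ i.succ → b j = a j) :
    (List.ofFn b).prod = (List.ofFn a).prod := by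
  induction m with
  | zero => exact i.elim0
  | succ m ih =>
    induction i using Fin.cases with
    | zero =>
      have htail : (fun j : Fin m => b j.succ.succ) = fun j => a j.succ.succ :=
        funext fun j => hrest _ (Fin.succ_ne_zero _) (Fin.succ_succ_ne_one _)
      simp only [List.ofFn_succ, List.prod_cons, ← mul_assoc, htail]
      simp_all
    | succ i =>
      have h0 : b 0 = a 0 := hrest 0 (by simp [Fin.ext_iff]) (Fin.succ_ne_zero _).symm
      rw [List.ofFn_succ (f := a), List.ofFn_succ (f := b), List.prod_cons, List.prod_cons, h0,
        ih (i := i) (by simpa using hpair) fun j h1 h2 =>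
          hrest j.succ (by simpa using h1) (by simpa using h2)]

section Hurwitz

variable {G : Type*} [Group G] {m : ℕ}

/-- The Hurwitz move `(…, aᵢ, aᵢ₊₁, …) ↦ (…, aᵢ₊₁, aᵢ₊₁⁻¹ aᵢ aᵢ₊₁, …)` of `HurwitzMove`. -/
def hurwitzMoveEquiv (i : Fin m) : (Fin (m + 1) → G) ≃ (Fin (m + 1) → G) where
  toFun a := Function.update (a ∘ Equiv.swap i.castSucc i.succ) i.succ
    ((a i.succ)⁻¹ * a i.castSucc * a i.succ)
  invFun b := Function.update (b ∘ Equiv.swap i.castSucc i.succ) i.castSucc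
    (b i.castSucc * b i.succ * (b i.castSucc)⁻¹)
  left_inv a := by
    have hne : i.castSucc ≠ i.succ := Fin.castSucc_lt_succ.ne
    funext j
    rcases eq_or_ne j i.castSucc with rfl | h1
    · simp [hne, mul_assoc]
    rcases eq_or_ne j i.succ with rfl | h2
    · simp [hne, hne.symm]
    · simp [h1, h2, Equiv.swap_apply_of_ne_of_ne]
  right_inv b := by
    have hne : i.castSucc ≠ i.succ := Fin.castSucc_lt_succ.ne
    funext j
    rcases eq_or_ne j i.castSucc with rfl | h1
    · simp [hne, hne.symm]
    rcases eq_or_ne j i.succ with rfl | h2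
    · simp [hne.symm, mul_assoc]
    · simp [h1, h2, Equiv.swap_apply_of_ne_of_ne]

variable (i : Fin m) (a : Fin (m + 1) → G)

lemma prod_ofFn_hurwitzMoveEquiv :
    (List.ofFn (hurwitzMoveEquiv i a)).prod = (List.ofFn a).prod := by
  have hne : i.castSucc ≠ i.succ := Fin.castSucc_lt_succ.ne
  refine prod_ofFn_eq_of_adjacent_mul_eq (i := i) ?_ fun j h1 h2 => ?_
  · simp [hurwitzMoveEquiv, hne, mul_assoc]
  · simp [hurwitzMoveEquiv, h1, h2, Equiv.swap_apply_of_ne_of_ne]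

lemma conjPermuted_hurwitzMoveEquiv {S : Subgroup G} (ha : ∀ j, a j ∈ S) :
    ConjPermuted S (Equiv.swap i.castSucc i.succ) a (hurwitzMoveEquiv i a) := by
  intro j
  rcases eq_or_ne j i.succ with rfl | h
  · exact ⟨(a i.succ)⁻¹, S.inv_mem (ha _), by simp [hurwitzMoveEquiv]⟩
  · exact ⟨1, S.one_mem, by simp [hurwitzMoveEquiv, h]⟩

lemma conjPermuted_hurwitzMoveEquiv_symm {S : Subgroup G} (ha : ∀ j, a j ∈ S) :
    ConjPermuted S (Equiv.swap i.castSucc i.succ) a ((hurwitzMoveEquiv i).symm a) := by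
  intro j
  rcases eq_or_ne j i.castSucc with rfl | h
  · exact ⟨a i.castSucc, ha _, by simp [hurwitzMoveEquiv]⟩
  · exact ⟨1, S.one_mem, by simp [hurwitzMoveEquiv, h]⟩

end Hurwitz

section Counting

variable {n : ℕ} (W : Subgroup (GLn n)) (c : GLn n)

def blockFactorizationsOfType {k : ℕ} (T : Fin k → Submodule ℂ (V n)) :
    Set (Fin k → GLn n) :=
  {w | IsBlockFactorization W c w ∧ ∀ j, inWOrbit W (T j) (fixedSpace (w j))}

lemma card_blockFactorizationsOfType_comp_swap {m : ℕ} (T : Fin (m + 1) → Submodule ℂ (V n))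
    (i : Fin m) :
    Nat.card (blockFactorizationsOfType W c T) =
      Nat.card (blockFactorizationsOfType W c (T ∘ Equiv.swap i.castSucc i.succ)) := by
  refine Nat.card_congr ((hurwitzMoveEquiv i).subtypeEquiv fun a => ⟨?_, ?_⟩)
  · rintro ⟨ha, haT⟩
    have h := conjPermuted_hurwitzMoveEquiv i a fun j => (ha.1 j).1
    exact ⟨h.isBlockFactorization (prod_ofFn_hurwitzMoveEquiv i a) ha, h.inWOrbit_fixedSpace haT⟩
  · rintro ⟨hb, hbT⟩
    have h := conjPermuted_hurwitzMoveEquiv_symm i _ fun j => (hb.1 j).1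
    rw [Equiv.symm_apply_apply] at h
    refine ⟨h.isBlockFactorization (prod_ofFn_hurwitzMoveEquiv i a).symm hb, fun j => ?_⟩
    simpa using h.inWOrbit_fixedSpace hbT j

lemma card_blockFactorizationsOfType_comp_perm {k : ℕ} (T : Fin k → Submodule ℂ (V n))
    (π : Equiv.Perm (Fin k)) :
    Nat.card (blockFactorizationsOfType W c T) =
      Nat.card (blockFactorizationsOfType W c (T ∘ π)) := by
  rcases k with _ | m
  · rw [Subsingleton.elim (T ∘ π) T]
  have hπ : π ∈ Submonoid.closure (Set.range fun i : Fin m => Equiv.swap i.castSucc i.succ) :=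
    Equiv.Perm.mclosure_swap_castSucc_succ m ▸ Submonoid.mem_top π
  induction hπ using Submonoid.closure_induction generalizing T with
  | mem _ h =>
    obtain ⟨i, rfl⟩ := h
    exact card_blockFactorizationsOfType_comp_swap W c T i
  | one => rfl
  | mul σ τ _ _ hσ hτ => rw [hσ T, hτ (T ∘ σ)]; rfl

end Counting

theorem count_block_factorizations_perm_invariant_general {n k : ℕ}
    (W : Subgroup (GLn n))
    (c : GLn n)
    (Z : Fin k → Submodule ℂ (V n))
    (π : Equiv.Perm (Fin k)) :
    Nat.card {w : Fin k → GLn n // IsBlockFactorization W c w ∧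
        ∀ i, inWOrbit W (Z i) (fixedSpace (w i))}
      = Nat.card {w : Fin k → GLn n // IsBlockFactorization W c w ∧
        ∀ i, inWOrbit W (Z (π i)) (fixedSpace (w i))} :=
  card_blockFactorizationsOfType_comp_perm W c Z π

/-- **Invariance of factorization counts under permuting the passport.** For a
well-generated complex reflection group `W` with Coxeter element `c`, flats
`Z₁, …, Z_k`, and a permutation `π` of `{1, …, k}`, there are as many block
factorizations `(w₁, …, w_k)` of `c` with `V^{wᵢ}` in the orbit of `Zᵢ` for all `i`
as with `V^{wᵢ}` in the orbit of `Z_{π(i)}` for all `i`. -/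
theorem count_block_factorizations_perm_invariant {n k : ℕ} (hn : 0 < n)
    (W : Subgroup (GLn n)) (hW : IsWellGenerated W)
    (c : GLn n) (hc : IsCoxeterElement W c)
    (Z : Fin k → Submodule ℂ (V n)) (hZ : ∀ i, IsFlat W (Z i))
    (π : Equiv.Perm (Fin k)) :
    Nat.card {w : Fin k → GLn n // IsBlockFactorization W c w ∧
        ∀ i, inWOrbit W (Z i) (fixedSpace (w i))}
      = Nat.card {w : Fin k → GLn n // IsBlockFactorization W c w ∧
        ∀ i, inWOrbit W (Z (π i)) (fixedSpace (w i))} :=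
  count_block_factorizations_perm_invariant_general W c Z π

end CRG
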